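/- Let Σ ∈ ℝ^{d×d} be symmetric positive definite. For every symmetric positive semidefinite S ∈ ℝ^{d×d}, one has B(S) = Tr(S + Σ − 2(Σ^{1/2} S Σ^{1/2})^{1/2}) ≥ 0, and B(S) = 0 if and only if S = Σ. In particular, when ρ = 0 the only symmetric positive semidefinite matrix with B(S) ≤ ρ² is S = Σ. -/

import Mathlib

open Matrix

-- `msqrt M` is the unique symmetric PSD square root of a symmetric PSD matrix `M` (else `0`).
open Classical in
noncomputable def msqrt {ι : Type*} [Fintype ι] [DecidableEq ι] (M : Matrix ι ι ℝ) : Matrix ι ι ℝ :=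
  if h : M.PosSemidef then
    (h.1.eigenvectorUnitary : Matrix ι ι ℝ) * diagonal ((RCLike.ofReal : ℝ → ℝ) ∘ Real.sqrt ∘ h.1.eigenvalues) *
      (star h.1.eigenvectorUnitary : Matrix ι ι ℝ) else 0

/-- `Bdist Sg S = Tr(S + Σ − 2(Σ^{1/2} S Σ^{1/2})^{1/2})`. -/
noncomputable def Bdist {ι : Type*} [Fintype ι] [DecidableEq ι] (Sg S : Matrix ι ι ℝ) : ℝ :=
  (S + Sg - (2:ℝ) • msqrt (msqrt Sg * S * msqrt Sg)).trace

/-- The objective `f(S) = Tr(S_xx − S_xy S_yy⁻¹ S_yx)` of the convex reformulation. -/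
noncomputable def fobj {n m : ℕ} (S : Matrix (Fin n ⊕ Fin m) (Fin n ⊕ Fin m) ℝ) : ℝ :=
  (S.toBlocks₁₁ - S.toBlocks₁₂ * S.toBlocks₂₂⁻¹ * S.toBlocks₂₁).trace

/-- The gradient matrix `D(G) = [I, −G]ᵀ[I, −G] = [[I, −G], [−Gᵀ, GᵀG]]`. -/
def Dmat {n m : ℕ} (G : Matrix (Fin n) (Fin m) ℝ) :
    Matrix (Fin n ⊕ Fin m) (Fin n ⊕ Fin m) ℝ :=
  Matrix.fromBlocks 1 (-G) (-Gᵀ) (Gᵀ * G)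

/-!
Write `A = Σ^{1/2}` and `P = (A S A)^{1/2}`. Since `P² = A S A`, the matrix `C = A⁻¹ P − A` satisfies
`C Cᵀ = S − A⁻¹ P A − A P A⁻¹ + Σ`, whose trace is `Tr S − 2 Tr P + Tr Σ = B(S)`. Hence `B(S)` is the
squared Frobenius norm of `C`, so it is nonnegative and vanishes only when `P = A² = Σ`, which forces
`A S A = Σ² = A Σ A`, i.e. `S = Σ`.
-/

open scoped MatrixOrder

namespace Matrix

variable {ι : Type*} [Fintype ι]

lemma PosSemidef.mul_mul_of_isHermitian {S A : Matrix ι ι ℝ} (hS : S.PosSemidef)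
    (hA : A.IsHermitian) : (A * S * A).PosSemidef := by
  simpa only [hA.eq] using hS.mul_mul_conjTranspose_same A

variable [DecidableEq ι]

lemma msqrt_eq_cfcSqrt {M : Matrix ι ι ℝ} (hM : M.PosSemidef) : msqrt M = CFC.sqrt M := by
  rw [msqrt, dif_pos hM, CFC.sqrt_eq_cfc, cfc_nnreal_eq_real _ M, hM.1.cfc_eq]
  simp [IsHermitian.cfc, Unitary.conjStarAlgAut_apply, Function.comp_def,
    max_eq_left (hM.eigenvalues_nonneg _)]

lemma PosSemidef.msqrt {M : Matrix ι ι ℝ} (hM : M.PosSemidef) : (msqrt M).PosSemidef := by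
  rw [msqrt_eq_cfcSqrt hM]
  exact nonneg_iff_posSemidef.1 (CFC.sqrt_nonneg M)

lemma msqrt_mul_msqrt {M : Matrix ι ι ℝ} (hM : M.PosSemidef) : msqrt M * msqrt M = M := by
  rw [msqrt_eq_cfcSqrt hM]
  exact CFC.sqrt_mul_sqrt_self M hM.nonneg

lemma msqrt_mul_self {A : Matrix ι ι ℝ} (hA : A.PosSemidef) : msqrt (A * A) = A := by
  have hAA : (A * A).PosSemidef := by simpa only [hA.1.eq] using posSemidef_conjTranspose_mul_self A
  rw [msqrt_eq_cfcSqrt hAA]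
  exact CFC.sqrt_mul_self A hA.nonneg

lemma inv_mul_mul_mul_inv {A : Matrix ι ι ℝ} (hA : IsUnit A.det) (X : Matrix ι ι ℝ) :
    A⁻¹ * (A * X * A) * A⁻¹ = X := by
  simp only [← Matrix.mul_assoc, nonsing_inv_mul A hA, Matrix.one_mul]
  rw [Matrix.mul_assoc, mul_nonsing_inv A hA, Matrix.mul_one]

lemma trace_add_mul_self_sub_two_smul {S A P : Matrix ι ι ℝ} (hA : IsUnit A.det)
    (hAH : A.IsHermitian) (hPH : P.IsHermitian) (hP : P * P = A * S * A) :
    (S + A * A - (2 : ℝ) • P).trace = ((A⁻¹ * P - A) * (A⁻¹ * P - A)ᴴ).trace := by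
  have hSq : A⁻¹ * P * (P * A⁻¹) = S := by
    rw [← inv_mul_mul_mul_inv hA S, ← hP]; simp only [Matrix.mul_assoc]
  have hPA : (A⁻¹ * P * A).trace = P.trace := by
    rw [Matrix.mul_assoc, trace_mul_comm, Matrix.mul_assoc, mul_nonsing_inv A hA, Matrix.mul_one]
  have hAP : (A * (P * A⁻¹)).trace = P.trace := by
    rw [trace_mul_comm, Matrix.mul_assoc, nonsing_inv_mul A hA, Matrix.mul_one]
  rw [conjTranspose_sub, conjTranspose_mul, conjTranspose_nonsing_inv, hAH.eq, hPH.eq,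
    Matrix.sub_mul, Matrix.mul_sub, Matrix.mul_sub, hSq]
  simp only [trace_sub, trace_add, trace_smul, hPA, hAP, smul_eq_mul]
  ring

lemma eq_mul_self_of_inv_mul_eq {S A P : Matrix ι ι ℝ} (hA : IsUnit A.det)
    (hP : P * P = A * S * A) (h : A⁻¹ * P = A) : S = A * A := by
  have hP' : P = A * A := by
    rw [← congrArg (A * ·) h, ← Matrix.mul_assoc, mul_nonsing_inv A hA, Matrix.one_mul]
  rw [← inv_mul_mul_mul_inv hA S, ← hP, hP']
  simpa only [Matrix.mul_assoc] using inv_mul_mul_mul_inv hA (A * A)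

lemma PosDef.isUnit_det_msqrt {M : Matrix ι ι ℝ} (hM : M.PosDef) : IsUnit (msqrt M).det := by
  refine isUnit_iff_ne_zero.2 fun h => hM.det_pos.ne' ?_
  rw [← msqrt_mul_msqrt hM.posSemidef, det_mul, h, mul_zero]

variable {Sg S : Matrix ι ι ℝ}

lemma Bdist_eq_trace_mul_conjTranspose (hSg : Sg.PosDef) (hS : S.PosSemidef) :
    let A := msqrt Sg
    let C := A⁻¹ * msqrt (A * S * A) - A
    Bdist Sg S = (C * Cᴴ).trace := by
  intro A C
  have hA : A.IsHermitian := hSg.posSemidef.msqrt.1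
  have hASA : (A * S * A).PosSemidef := hS.mul_mul_of_isHermitian hA
  rw [← trace_add_mul_self_sub_two_smul hSg.isUnit_det_msqrt hA hASA.msqrt.1
    (msqrt_mul_msqrt hASA), msqrt_mul_msqrt hSg.posSemidef]
  rfl

lemma eq_of_Bdist_eq_zero (hSg : Sg.PosDef) (hS : S.PosSemidef) (h : Bdist Sg S = 0) :
    S = Sg := by
  rw [Bdist_eq_trace_mul_conjTranspose hSg hS, trace_mul_conjTranspose_self_eq_zero_iff,
    sub_eq_zero] at h
  have hASA := hS.mul_mul_of_isHermitian hSg.posSemidef.msqrt.1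
  rw [eq_mul_self_of_inv_mul_eq hSg.isUnit_det_msqrt (msqrt_mul_msqrt hASA) h,
    msqrt_mul_msqrt hSg.posSemidef]

lemma Bdist_self (hSg : Sg.PosSemidef) : Bdist Sg Sg = 0 := by
  have hAA : msqrt Sg * msqrt Sg = Sg := msqrt_mul_msqrt hSg
  have hSq : msqrt Sg * Sg * msqrt Sg = Sg * Sg :=
    calc msqrt Sg * Sg * msqrt Sg = msqrt Sg * (msqrt Sg * msqrt Sg) * msqrt Sg := by rw [hAA]
    _ = (msqrt Sg * msqrt Sg) * (msqrt Sg * msqrt Sg) := by simp only [Matrix.mul_assoc]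
    _ = Sg * Sg := by rw [hAA]
  rw [Bdist, hSq, msqrt_mul_self hSg, two_smul, sub_self, trace_zero]

end Matrix

theorem stmt16_general {d : ℕ} (Sg : Matrix (Fin d) (Fin d) ℝ) (hSg : Sg.PosDef)
    (S : Matrix (Fin d) (Fin d) ℝ) (hS : S.PosSemidef) :
    0 ≤ Bdist Sg S ∧ (Bdist Sg S = 0 ↔ S = Sg) ∧ (Bdist Sg S ≤ 0 → S = Sg) := by
  have nonneg : 0 ≤ Bdist Sg S := by
    rw [Bdist_eq_trace_mul_conjTranspose hSg hS]
    exact (posSemidef_self_mul_conjTranspose _).trace_nonneg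
  have eq_of_zero := eq_of_Bdist_eq_zero hSg hS
  exact ⟨nonneg, ⟨eq_of_zero, by rintro rfl; exact Bdist_self hSg.posSemidef⟩,
    fun h => eq_of_zero (le_antisymm h nonneg)⟩

/-- For every symmetric PSD `S`, `B(S) ≥ 0`, with `B(S) = 0` iff `S = Σ`; in particular, when
`ρ = 0` the only symmetric PSD matrix with `B(S) ≤ ρ²` is `S = Σ`. -/
theorem stmt16 {d : ℕ} [NeZero d] (Sg : Matrix (Fin d) (Fin d) ℝ) (hSg : Sg.PosDef)
    (S : Matrix (Fin d) (Fin d) ℝ) (hS : S.PosSemidef) :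
    0 ≤ Bdist Sg S ∧ (Bdist Sg S = 0 ↔ S = Sg) ∧ (Bdist Sg S ≤ 0 → S = Sg) :=
  stmt16_general Sg hSg S hS
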